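/- Let a, b, c be integers with a > 0 > c, a − |b| ≤ −c ≤ a + |b|, and k ≥ 1. Then the Mahler measure of g(x) = a·x^{2k} + b·x^k + c is M(g) = (|b| + √(b² − 4ac)) / 2. -/

import Mathlib

/-!
Substituting `X ^ k` does not change the Mahler measure: the roots of `f (X ^ k)` are the `k`-th
roots of those of `f`, and `max 1 ‖·‖` commutes with `k`-th powers. So it suffices to treat the
quadratic `a X² + b X + c`. Since `ac < 0` its roots are real of opposite signs, with absolute
values `(s - |b|) / 2a` and `(s + |b|) / 2a` where `s = √(b² - 4ac)`; the two hypotheses on `-c`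
say exactly that the first is `≤ 1` and the second `≥ 1`, so `M = a · (s + |b|) / 2a`.
-/

open Polynomial

noncomputable def mahlerMeasure (f : Polynomial ℂ) : ℝ :=
  ‖f.leadingCoeff‖ * ((f.roots).map (fun z => max 1 ‖z‖)).prod

lemma max_one_pow {t : ℝ} (ht : 0 ≤ t) (k : ℕ) : max 1 t ^ k = max 1 (t ^ k) := by
  rcases le_total t 1 with h | h
  · rw [max_eq_left h, one_pow, max_eq_left (pow_le_one₀ ht h)]
  · rw [max_eq_right h, max_eq_right (one_le_pow₀ h)]

theorem exists_quadratic_roots_abs_le_one_le_abs {a b c : ℝ} (ha : 0 < a) (hc : c < 0)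
    (h1 : a - |b| ≤ -c) (h2 : -c ≤ a + |b|) :
    ∃ x y : ℝ, a * (x + y) = -b ∧ a * (x * y) = c ∧ |x| ≤ 1 ∧ 1 ≤ |y| ∧
      a * |y| = (|b| + √(b ^ 2 - 4 * a * c)) / 2 := by
  wlog hb : 0 ≤ b generalizing b
  · obtain ⟨x, y, hsum, hprod, hx, hy, hay⟩ :=
      this (b := -b) (by rwa [abs_neg]) (by rwa [abs_neg]) (by linarith)
    refine ⟨-x, -y, by linarith, by linarith, by rwa [abs_neg], by rwa [abs_neg], ?_⟩
    simpa only [abs_neg, neg_sq] using hay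
  set s := √(b ^ 2 - 4 * a * c)
  have hs0 : 0 ≤ s := Real.sqrt_nonneg _
  have hs : s ^ 2 = b ^ 2 - 4 * a * c := Real.sq_sqrt (by nlinarith)
  have hbs : b ≤ s := by nlinarith
  rw [abs_of_nonneg hb] at h1 h2 ⊢
  refine ⟨(s - b) / (2 * a), -(b + s) / (2 * a), ?_, ?_, ?_, ?_, ?_⟩
  · field_simp; ring
  · field_simp; linear_combination -hs
  · rw [abs_of_nonneg (by positivity), div_le_one (by positivity)]
    nlinarith
  · rw [abs_div, abs_neg, abs_of_nonneg (by positivity), abs_of_pos (by positivity),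
      one_le_div (by positivity)]
    nlinarith
  · rw [abs_div, abs_neg, abs_of_nonneg (by positivity), abs_of_pos (by positivity)]
    field_simp

namespace Polynomial

theorem C_mul_X_sq_add_C_mul_X_add_C_eq {R : Type*} [CommRing R] {a b c x y : R}
    (hsum : a * (x + y) = -b) (hprod : a * (x * y) = c) :
    C a * X ^ 2 + C b * X + C c = C a * ((X - C x) * (X - C y)) := by
  obtain rfl : b = -(a * (x + y)) := by rw [hsum, neg_neg]
  subst hprod
  simp only [map_neg, map_mul, map_add]
  ring

theorem mahlerMeasure_X_pow_sub_C {k : ℕ} (hk : k ≠ 0) (r : ℂ) :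
    (X ^ k - C r).mahlerMeasure = max 1 ‖r‖ := by
  obtain ⟨z₀, hz₀⟩ := IsAlgClosed.exists_pow_nat_eq r (Nat.pos_of_ne_zero hk)
  have hroots : ∀ z ∈ (X ^ k - C r).roots, max 1 ‖z‖ = max 1 ‖z₀‖ := by
    intro z hz
    rw [← nthRoots, mem_nthRoots (Nat.pos_of_ne_zero hk), ← hz₀] at hz
    rw [(pow_left_inj₀ (norm_nonneg z) (norm_nonneg z₀) hk).mp
      (by rw [← norm_pow, ← norm_pow, hz])]
  rw [mahlerMeasure_eq_leadingCoeff_mul_prod_roots, (monic_X_pow_sub_C r hk).leadingCoeff,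
    norm_one, one_mul, Multiset.map_congr rfl hroots, Multiset.map_const',
    Multiset.prod_replicate, IsAlgClosed.card_roots_eq_natDegree, natDegree_X_pow_sub_C,
    max_one_pow (norm_nonneg _), ← norm_pow, hz₀]

theorem mahlerMeasure_comp_X_pow (p : ℂ[X]) {k : ℕ} (hk : k ≠ 0) :
    (p.comp (X ^ k)).mahlerMeasure = p.mahlerMeasure := by
  conv_lhs =>
    rw [← C_leadingCoeff_mul_prod_multiset_X_sub_C (IsAlgClosed.card_roots_eq_natDegree (p := p))]
  rw [mul_comp, C_comp, multiset_prod_comp, mahlerMeasure_mul, mahlerMeasure_const,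
    prod_mahlerMeasure_eq_mahlerMeasure_prod, Multiset.map_map, Multiset.map_map,
    mahlerMeasure_eq_leadingCoeff_mul_prod_roots]
  congr 2
  refine Multiset.map_congr rfl fun r _ => ?_
  simp [mahlerMeasure_X_pow_sub_C hk]

theorem mahlerMeasure_C_mul_X_sub_C_mul_X_sub_C (a : ℂ) {x y : ℂ} (hx : ‖x‖ ≤ 1)
    (hy : 1 ≤ ‖y‖) : (C a * ((X - C x) * (X - C y))).mahlerMeasure = ‖a‖ * ‖y‖ := by
  rw [mahlerMeasure_mul, mahlerMeasure_mul, mahlerMeasure_const, mahlerMeasure_X_sub_C,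
    mahlerMeasure_X_sub_C, max_eq_left hx, max_eq_right hy, one_mul]

end Polynomial

theorem mahler_trinomial (a b c : ℤ) (k : ℕ) (hk : 1 ≤ k) (ha : 0 < a) (hc : c < 0)
    (h1 : a - |b| ≤ -c) (h2 : -c ≤ a + |b|) :
    _root_.mahlerMeasure (C (a : ℂ) * X ^ (2 * k) + C (b : ℂ) * X ^ k + C (c : ℂ)) =
      (((|b| : ℤ) : ℝ) + Real.sqrt ((b : ℝ) ^ 2 - 4 * a * c)) / 2 := by
  have ha' : (0 : ℝ) < a := by exact_mod_cast ha
  obtain ⟨x, y, hsum, hprod, hx, hy, hay⟩ :=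
    exists_quadratic_roots_abs_le_one_le_abs (b := b) (c := c) ha'
      (by exact_mod_cast hc) (by exact_mod_cast h1) (by exact_mod_cast h2)
  have hg : C (a : ℂ) * X ^ (2 * k) + C (b : ℂ) * X ^ k + C (c : ℂ) =
      (C (a : ℂ) * ((X - C (x : ℂ)) * (X - C (y : ℂ)))).comp (X ^ k) := by
    rw [← C_mul_X_sq_add_C_mul_X_add_C_eq (b := (b : ℂ)) (c := (c : ℂ))
      (by exact_mod_cast congrArg ((↑) : ℝ → ℂ) hsum)
      (by exact_mod_cast congrArg ((↑) : ℝ → ℂ) hprod)]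
    simp [pow_mul']
  rw [_root_.mahlerMeasure, ← mahlerMeasure_eq_leadingCoeff_mul_prod_roots, hg,
    mahlerMeasure_comp_X_pow _ (by omega),
    mahlerMeasure_C_mul_X_sub_C_mul_X_sub_C _ (by simpa using hx) (by simpa using hy)]
  simpa [abs_of_pos ha'] using hay
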